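/- Let B = ⟨a, t ∣ t⁻¹a²t = a³⟩ be the Baumslag–Solitar group BS(2,3), let F be the subgroup of B generated by t and [a, t⁻¹at], and let φ : B → B be the endomorphism with φ(a) = a² and φ(t) = t. Then φ(F) equals the cyclic subgroup ⟨t⟩ generated by t; in particular, F is strictly contained in φ⁻¹(F). -/

import Mathlib

/-- The generator `a` of the Baumslag–Solitar group `BS(2,3)`,
as an element of the free group on `Bool` (`true ↦ a`, `false ↦ t`). -/
def bsA : FreeGroup Bool := FreeGroup.of true

/-- The generator `t` of the Baumslag–Solitar group `BS(2,3)`. -/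
def bsT : FreeGroup Bool := FreeGroup.of false

/-- The single relator `t⁻¹ a² t a⁻³` of `BS(2,3)`. -/
def bsRels : Set (FreeGroup Bool) := {bsT⁻¹ * bsA ^ 2 * bsT * bsA ^ (-3 : ℤ)}

/-- The Baumslag–Solitar group `BS(2,3) = ⟨a, t ∣ t⁻¹a²t = a³⟩`. -/
abbrev BS23 : Type := PresentedGroup bsRels

/-- The image of the generator `a` in `BS(2,3)`. -/
def aB : BS23 := PresentedGroup.of true

/-- The image of the generator `t` in `BS(2,3)`. -/
def tB : BS23 := PresentedGroup.of false

/-- The commutator with the convention `[x, y] := x⁻¹y⁻¹xy`. -/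
def pcomm {G : Type*} [Group G] (x y : G) : G := x⁻¹ * y⁻¹ * x * y

/-- The element `c := [a, t⁻¹at]` of `BS(2,3)`. -/
def cB : BS23 := pcomm aB (tB⁻¹ * aB * tB)

/-- The subgroup `F = ⟨t, [a, t⁻¹at]⟩` of `BS(2,3)`. -/
def Fsub : Subgroup BS23 := Subgroup.closure {tB, cB}

/-!
Since `t⁻¹a²t = a³`, the endomorphism `φ` sends `c = [a, t⁻¹at]` to `[a², a³] = 1`, so
`φ(F) = ⟨t⟩`; and `φ` is onto, as `φ(t⁻¹ata⁻¹) = a³a⁻² = a`. Hence `φ(φ⁻¹(F)) = F`, and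
`φ⁻¹(F) = F` would force `F = ⟨t⟩`, i.e. `c = tⁿ`. The exponent sum of `t` gives `n = 0`, and `c ≠ 1`
by Britton's lemma in an HNN extension of `ℤ` into which `BS(2,3)` maps.
-/

theorem pcomm_eq_one_of_commute {G : Type*} [Group G] {x y : G} (h : Commute x y) :
    pcomm x y = 1 := by
  rw [pcomm, mul_assoc, h.eq, ← mul_inv_rev, inv_mul_cancel]

theorem map_pcomm {G H : Type*} [Group G] [Group H] (f : G →* H) (x y : G) :
    f (pcomm x y) = pcomm (f x) (f y) := by
  simp only [pcomm, map_mul, map_inv]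

theorem Subgroup.lt_comap_of_map_lt {G : Type*} [Group G] {f : G →* G}
    (hf : Function.Surjective f) {H : Subgroup G} (h : H.map f < H) : H < H.comap f := by
  refine lt_of_le_of_ne (Subgroup.map_le_iff_le_comap.mp h.le) fun heq => h.ne ?_
  calc H.map f = (H.comap f).map f := congrArg _ heq
    _ = H := Subgroup.map_comap_eq_self_of_surjective hf H

namespace HNNExtension

variable {G : Type*} [Group G] {A B : Subgroup G} (φ : A ≃* B)

/-- By Britton's lemma: the word `g⁻¹ t⁻¹ g⁻¹ t g t⁻¹ g t` contains no pinch `t⁻¹ b t` with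
`b ∈ B` or `t a t⁻¹` with `a ∈ A`. -/
theorem pcomm_of_conj_ne_one {g : G} (hA : g ∉ A) (hB : g ∉ B) :
    pcomm (of g : HNNExtension G A B φ) (t⁻¹ * of g * t) ≠ 1 := by
  let w : NormalWord.ReducedWord G A B :=
    { head := g⁻¹
      toList := [(-1, g⁻¹), (1, g), (-1, g), (1, 1)]
      chain := by
        simp only [List.isChain_cons_cons, List.isChain_singleton, toSubgroup_one,
          toSubgroup_neg_one, inv_mem_iff]
        exact ⟨fun h => absurd h hB, fun h => absurd h hA, fun h => absurd h hB, trivial⟩ }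
  have hw : w.prod φ = pcomm (of g) (t⁻¹ * of g * t) := by
    simp [w, NormalWord.ReducedWord.prod, pcomm, mul_assoc]
  intro h1
  have := ReducedWord.toList_eq_nil_of_mem_of_range φ w (by rw [hw, h1]; exact one_mem _)
  simp [w] at this

end HNNExtension

def mulLeftHom (k : ℤ) : Multiplicative ℤ →* Multiplicative ℤ :=
  (AddMonoidHom.mulLeft k).toMultiplicative

theorem mulLeftHom_injective {k : ℤ} (hk : k ≠ 0) : Function.Injective (mulLeftHom k) :=
  fun _ _ h => mul_right_injective₀ hk h

theorem mulLeftHom_ofAdd_one (k : ℤ) : mulLeftHom k (Multiplicative.ofAdd 1) = .ofAdd k :=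
  congrArg Multiplicative.ofAdd (mul_one k)

theorem ofAdd_one_notMem_range_mulLeftHom {k : ℤ} (hk : 2 ≤ k) :
    Multiplicative.ofAdd 1 ∉ (mulLeftHom k).range := by
  rintro ⟨y, hy⟩
  rcases Int.eq_one_or_neg_one_of_mul_eq_one (congrArg Multiplicative.toAdd hy) with h | h <;> omega

section

variable {G : Type*} [Group G] (x y : G) (h : y⁻¹ * x ^ 2 * y = x ^ 3)

def bsLift : BS23 →* G :=
  PresentedGroup.toGroup (f := fun b => cond b x y) (by
    rintro r rfl
    simp [bsA, bsT, h])

@[simp] theorem bsLift_a : bsLift x y h aB = x := PresentedGroup.toGroup.of _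
@[simp] theorem bsLift_t : bsLift x y h tB = y := PresentedGroup.toGroup.of _

end

theorem tB_inv_mul_aB_sq_mul_tB : tB⁻¹ * aB ^ 2 * tB = aB ^ 3 := by
  have := PresentedGroup.mk_eq_mk_of_mul_inv_mem (rels := bsRels)
    (x := bsT⁻¹ * bsA ^ 2 * bsT) (y := bsA ^ 3) (by simp [bsRels])
  simp only [map_mul, map_inv, map_pow] at this
  exact this

theorem map_cB_eq_one {φ : BS23 →* BS23} (ha : φ aB = aB ^ 2) (ht : φ tB = tB) : φ cB = 1 := by
  rw [cB, map_pcomm, map_mul, map_mul, map_inv, ha, ht, tB_inv_mul_aB_sq_mul_tB]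
  exact pcomm_eq_one_of_commute (Commute.pow_pow_self aB 2 3)

theorem surjective_of_map_aB_of_map_tB {φ : BS23 →* BS23} (ha : φ aB = aB ^ 2) (ht : φ tB = tB) :
    Function.Surjective φ := by
  refine fun x => PresentedGroup.generated_by bsRels φ.range ?_ x
  rintro (_ | _)
  · exact ⟨tB, ht⟩
  · refine ⟨tB⁻¹ * aB * tB * aB⁻¹, ?_⟩
    rw [map_mul, map_mul, map_mul, map_inv, map_inv, ha, ht, tB_inv_mul_aB_sq_mul_tB]
    show aB ^ 3 * (aB ^ 2)⁻¹ = aB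
    group

open Multiplicative in
def tExponent : BS23 →* Multiplicative ℤ := bsLift 1 (ofAdd 1) (by simp)

theorem tExponent_cB : tExponent cB = 1 := by
  rw [cB, map_pcomm]
  exact pcomm_eq_one_of_commute (Commute.all _ _)

/-- `3k ↦ 2k`: the HNN extension of `ℤ = ⟨a⟩` along it satisfies `t a³ t⁻¹ = a²`, the defining
relation of `BS(2,3)`. -/
noncomputable def bsHNNEquiv : (mulLeftHom 3).range ≃* (mulLeftHom 2).range :=
  (MonoidHom.ofInjective (mulLeftHom_injective three_ne_zero)).symm.trans
    (MonoidHom.ofInjective (mulLeftHom_injective two_ne_zero))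

theorem bsHNNEquiv_symm_ofInjective (x : Multiplicative ℤ) :
    bsHNNEquiv.symm (MonoidHom.ofInjective (mulLeftHom_injective two_ne_zero) x) =
      MonoidHom.ofInjective (mulLeftHom_injective three_ne_zero) x := by
  simp [bsHNNEquiv]

abbrev BSHNN : Type := HNNExtension (Multiplicative ℤ) _ _ bsHNNEquiv

open Multiplicative HNNExtension in
theorem BSHNN.t_inv_mul_of_sq_mul_t :
    t⁻¹ * (of (ofAdd 1) : BSHNN) ^ 2 * t = of (ofAdd 1) ^ 3 := by
  have := equiv_symm_eq_conj (φ := bsHNNEquiv)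
    (MonoidHom.ofInjective (mulLeftHom_injective two_ne_zero) (ofAdd 1))
  rw [bsHNNEquiv_symm_ofInjective, MonoidHom.ofInjective_apply, MonoidHom.ofInjective_apply,
    mulLeftHom_ofAdd_one, mulLeftHom_ofAdd_one] at this
  have hpow (n : ℕ) : (of (ofAdd 1) : BSHNN) ^ n = of (ofAdd (n : ℤ)) := by
    rw [← map_pow, ← ofAdd_nsmul, nsmul_one]
  rw [hpow, hpow]
  exact this.symm

open Multiplicative HNNExtension in
theorem cB_ne_one : cB ≠ 1 := by
  let ρ : BS23 →* BSHNN := bsLift (of (ofAdd 1)) t BSHNN.t_inv_mul_of_sq_mul_t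
  have hρ : ρ cB ≠ 1 := by
    rw [cB, map_pcomm, map_mul, map_mul, map_inv, bsLift_a, bsLift_t]
    exact pcomm_of_conj_ne_one bsHNNEquiv (ofAdd_one_notMem_range_mulLeftHom (by norm_num))
      (ofAdd_one_notMem_range_mulLeftHom le_rfl)
  exact fun h => hρ (h ▸ map_one ρ)

theorem cB_notMem_zpowers_tB : cB ∉ Subgroup.zpowers tB := by
  rintro ⟨n, hn : tB ^ n = cB⟩
  have hn0 : n = 0 := by
    have := congrArg tExponent hn
    rw [map_zpow, tExponent_cB, tExponent, bsLift_t, ← ofAdd_zsmul, smul_eq_mul, mul_one] at this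
    exact Multiplicative.ofAdd.injective this
  exact cB_ne_one (by rw [← hn, hn0, zpow_zero])

theorem zpowers_tB_lt_Fsub : Subgroup.zpowers tB < Fsub :=
  SetLike.lt_iff_le_and_exists.mpr
    ⟨Subgroup.zpowers_le.mpr (Subgroup.subset_closure (by simp)),
      cB, Subgroup.subset_closure (by simp), cB_notMem_zpowers_tB⟩

/-- If `φ : BS(2,3) → BS(2,3)` is the endomorphism with `φ(a) = a²` and `φ(t) = t`,
then `φ(F) = ⟨t⟩`; in particular `F` is strictly contained in `φ⁻¹(F)`. -/
theorem image_F_eq_zpowers_t (φ : BS23 →* BS23)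
    (ha : φ aB = aB ^ 2) (ht : φ tB = tB) :
    Fsub.map φ = Subgroup.zpowers tB ∧ Fsub < Fsub.comap φ := by
  have hmap : Fsub.map φ = Subgroup.zpowers tB := by
    rw [Fsub, MonoidHom.map_closure, Set.image_pair, ht, map_cB_eq_one ha ht,
      Set.pair_comm, Subgroup.closure_insert_one, Subgroup.zpowers_eq_closure]
  exact ⟨hmap, Subgroup.lt_comap_of_map_lt (surjective_of_map_aB_of_map_tB ha ht)
    (hmap ▸ zpowers_tB_lt_Fsub)⟩
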